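/- Let α, β > -1, n ≥ 2, let ζ_{n,1},…,ζ_{n,n} be the zeros of P_n^{(α,β)} and ζ'_{n,1},…,ζ'_{n,n-1} the zeros of its derivative. Then for any continuous convex function f : [-1,1] → ℝ, (n+α+β+1) Σ_{i=1}^{n} f(ζ_{n,i}) ≤ (n+α+β) Σ_{j=1}^{n-1} f(ζ'_{n,j}) + (n+β) f(1) + (n+α) f(-1). -/

import Mathlib

/-!
Let `K = n(n+α+β+1)` and let `q` be the polynomial part of the Rodrigues formula, so that
`(1-x²)q'' + (β-α-(α+β+2)x)q' + Kq = 0`. Give the nodes `ζ'_j`, `1`, `-1` the weights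
`(1-ζ_i²)/(ζ_i-ζ'_j)²`, `(α+1)(1+ζ_i)/(1-ζ_i)`, `(β+1)(1-ζ_i)/(1+ζ_i)`.
Expanding `q''/q'` and `q'''/q'` over the `ζ'_j` in the equation and its derivative at `ζ_i`
shows that row `i` has total mass `K` and barycentre `ζ_i`; expanding `q'/q` and `q''/q` over
the `ζ_i` in the equation at `ζ'_j` and at `±1` gives the column sums `K - n`, `K - n(α+1)`,
`K - n(β+1)`. Jensen's inequality in each row, summed over `i` and divided by `n`, is the claim.
-/

/-- The Jacobi polynomial `P_n^{(α,β)}`, as a real function, defined via the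
Rodrigues formula. -/
noncomputable def jacobiFun (n : ℕ) (α β : ℝ) (x : ℝ) : ℝ :=
  ((-1 : ℝ) ^ n / (2 ^ n * n.factorial)) * (1 - x) ^ (-α) * (1 + x) ^ (-β) *
    iteratedDeriv n (fun z : ℝ => (1 - z) ^ ((n : ℝ) + α) * (1 + z) ^ ((n : ℝ) + β)) x

open Polynomial Finset Set

theorem ConvexOn.mul_sum_le_sum_sum_mul {E ι κ : Type*} [AddCommGroup E] [Module ℝ E]
    [Fintype ι] [Fintype κ] {s : Set E} {f : E → ℝ} (hf : ConvexOn ℝ s f) {x : ι → E}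
    {y : κ → E} (hy : ∀ k, y k ∈ s) {w : ι → κ → ℝ} (hw : ∀ i k, 0 ≤ w i k) {c : ℝ}
    (hc : 0 < c) (hrow : ∀ i, ∑ k, w i k = c) (hbar : ∀ i, ∑ k, w i k • y k = c • x i) :
    c * ∑ i, f (x i) ≤ ∑ k, (∑ i, w i k) * f (y k) := by
  have hpoint : ∀ i, c * f (x i) ≤ ∑ k, w i k * f (y k) := by
    intro i
    have hx : x i = ∑ k, (w i k / c) • y k := by
      simp_rw [div_eq_inv_mul, mul_smul]
      rw [← smul_sum, hbar i, smul_smul, inv_mul_cancel₀ hc.ne', one_smul]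
    have hjensen := hf.map_sum_le (t := univ) (fun k _ => div_nonneg (hw i k) hc.le)
      (by rw [← sum_div, hrow, div_self hc.ne']) (fun k _ => hy k)
    rw [← hx] at hjensen
    calc c * f (x i) ≤ c * ∑ k, (w i k / c) • f (y k) := by gcongr
      _ = ∑ k, w i k * f (y k) := by
        rw [mul_sum]; congr 1 with k; rw [smul_eq_mul]; field_simp
  calc c * ∑ i, f (x i) ≤ ∑ i, ∑ k, w i k * f (y k) := by
        rw [mul_sum]; exact sum_le_sum fun i _ => hpoint i
    _ = ∑ k, (∑ i, w i k) * f (y k) := by rw [sum_comm]; simp only [sum_mul]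

namespace Polynomial

structure SplitsWithSimpleRoots {ι : Type*} [Fintype ι] (p : ℝ[X]) (r : ι → ℝ) : Prop where
  ne_zero : p ≠ 0
  natDegree_le : p.natDegree ≤ Fintype.card ι
  injective : Function.Injective r
  isRoot : ∀ i, p.IsRoot (r i)

namespace SplitsWithSimpleRoots

variable {ι : Type*} [Fintype ι] {p : ℝ[X]} {r : ι → ℝ}

theorem roots_eq (h : p.SplitsWithSimpleRoots r) : p.roots = univ.val.map r := by
  have hle : univ.val.map r ≤ p.roots :=
    (Multiset.le_iff_subset (univ.nodup.map h.injective)).2 fun x hx => by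
      obtain ⟨i, -, rfl⟩ := Multiset.mem_map.1 hx
      exact (mem_roots h.ne_zero).2 (h.isRoot i)
  refine (Multiset.eq_of_le_of_card_le hle ?_).symm
  simpa using (card_roots' p).trans h.natDegree_le

theorem natDegree_eq (h : p.SplitsWithSimpleRoots r) : p.natDegree = Fintype.card ι :=
  h.natDegree_le.antisymm (by simpa [h.roots_eq] using card_roots' p)

theorem splits (h : p.SplitsWithSimpleRoots r) : p.Splits :=
  splits_iff_card_roots.2 (by simp [h.roots_eq, h.natDegree_eq])

theorem eval_ne_zero (h : p.SplitsWithSimpleRoots r) {x : ℝ} (hx : ∀ i, x ≠ r i) :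
    p.eval x ≠ 0 := fun h0 => by
  obtain ⟨i, -, hi⟩ := Multiset.mem_map.1 (h.roots_eq ▸ (mem_roots h.ne_zero).2 h0)
  exact hx i hi.symm

theorem eval_derivative_ne_zero (h : p.SplitsWithSimpleRoots r) (i : ι) :
    (derivative p).eval (r i) ≠ 0 := by
  classical
  have hmult : p.rootMultiplicity (r i) = 1 := by
    rw [← count_roots, h.roots_eq, Multiset.count_map_eq_count' r _ h.injective]
    exact Multiset.count_eq_one_of_mem univ.nodup (mem_univ i)
  intro h'
  have := (one_lt_rootMultiplicity_iff_isRoot h.ne_zero).2 ⟨h.isRoot i, h'⟩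
  omega

theorem eval_derivative_eq_mul_sum_inv (h : p.SplitsWithSimpleRoots r) {x : ℝ}
    (hx : ∀ i, x ≠ r i) : (derivative p).eval x = p.eval x * ∑ i, (x - r i)⁻¹ := by
  rw [h.splits.eval_derivative_eq_eval_mul_sum (h.eval_ne_zero hx), h.roots_eq, Multiset.map_map]
  simp only [Function.comp_def, one_div]
  rfl

theorem eval_derivative_derivative_eq (h : p.SplitsWithSimpleRoots r) {x : ℝ}
    (hx : ∀ i, x ≠ r i) :
    (derivative (derivative p)).eval x =
      p.eval x * ((∑ i, (x - r i)⁻¹) ^ 2 - ∑ i, ((x - r i)⁻¹) ^ 2) := by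
  have hlog : (fun y => (derivative p).eval y) =ᶠ[nhds x]
      fun y => p.eval y * ∑ i, (y - r i)⁻¹ := by
    filter_upwards [Filter.eventually_all.2 fun i => eventually_ne_nhds (hx i)] with y hy
    exact h.eval_derivative_eq_mul_sum_inv hy
  have hsum : HasDerivAt (fun y => ∑ i, (y - r i)⁻¹) (∑ i, -1 / (x - r i) ^ 2) x :=
    HasDerivAt.fun_sum fun i _ => ((hasDerivAt_id x).sub_const (r i)).fun_inv (sub_ne_zero.2 (hx i))
  have h2 := (derivative p).hasDerivAt x |>.unique
    (((p.hasDerivAt x).mul hsum).congr_of_eventuallyEq hlog)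
  rw [h2, h.eval_derivative_eq_mul_sum_inv hx]
  simp only [neg_div, one_div, sum_neg_distrib, inv_pow]
  ring

end SplitsWithSimpleRoots

end Polynomial

def JacobiODE (α β : ℝ) (n : ℕ) (p : ℝ[X]) : Prop :=
  (1 - X ^ 2) * derivative (derivative p) + (C (β - α) - C (α + β + 2) * X) * derivative p +
    C (n * (n + α + β + 1)) * p = 0

namespace JacobiODE

variable {α β : ℝ} {n m : ℕ} {q : ℝ[X]}

theorem eval (hq : JacobiODE α β n q) (x : ℝ) :
    (1 - x ^ 2) * (derivative (derivative q)).eval x +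
      (β - α - (α + β + 2) * x) * (derivative q).eval x + n * (n + α + β + 1) * q.eval x = 0 := by
  simpa using congrArg (Polynomial.eval x) hq

theorem eval_derivative (hq : JacobiODE α β n q) (x : ℝ) :
    (1 - x ^ 2) * (derivative (derivative (derivative q))).eval x +
      (β - α - (α + β + 4) * x) * (derivative (derivative q)).eval x +
      (n * (n + α + β + 1) - (α + β + 2)) * (derivative q).eval x = 0 := by
  have h := congrArg (fun p => (derivative p).eval x) hq
  simp only [derivative_add, derivative_mul, derivative_sub, derivative_one, derivative_X_pow,
    derivative_C, derivative_X, derivative_zero, eval_add, eval_mul, eval_sub, eval_one,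
    eval_pow, eval_X, eval_C, eval_zero] at h
  linear_combination h

variable {ζ : Fin n → ℝ} {ζ' : Fin m → ℝ}

theorem root_ne_derivative_root (hζ : q.SplitsWithSimpleRoots ζ)
    (hζ' : (derivative q).SplitsWithSimpleRoots ζ') (i : Fin n) (j : Fin m) : ζ i ≠ ζ' j :=
  fun h => hζ.eval_derivative_ne_zero i (h ▸ hζ'.isRoot j)

theorem sum_inv_sub_eq_zero (hζ : q.SplitsWithSimpleRoots ζ)
    (hζ' : (derivative q).SplitsWithSimpleRoots ζ') (j : Fin m) :
    ∑ i, (ζ' j - ζ i)⁻¹ = 0 := by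
  have hne i := (root_ne_derivative_root hζ hζ' i j).symm
  have h := hζ.eval_derivative_eq_mul_sum_inv hne
  rw [hζ'.isRoot j, eq_comm, mul_eq_zero] at h
  exact h.resolve_left (hζ.eval_ne_zero hne)

theorem one_sub_sq_mul_sum_inv_sub_sq (hq : JacobiODE α β n q) (hζ : q.SplitsWithSimpleRoots ζ)
    (hζ' : (derivative q).SplitsWithSimpleRoots ζ') (j : Fin m) :
    (1 - ζ' j ^ 2) * ∑ i, ((ζ' j - ζ i)⁻¹) ^ 2 = n * (n + α + β + 1) := by
  have hne i := (root_ne_derivative_root hζ hζ' i j).symm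
  have h := hq.eval (ζ' j)
  rw [hζ.eval_derivative_derivative_eq hne, sum_inv_sub_eq_zero hζ hζ' j, hζ'.isRoot j] at h
  have hq0 := hζ.eval_ne_zero hne
  apply mul_left_cancel₀ hq0
  linear_combination -h

theorem sum_inv_one_sub (hq : JacobiODE α β n q) (hζ : q.SplitsWithSimpleRoots ζ)
    (hne : ∀ i, (1 : ℝ) ≠ ζ i) :
    2 * (α + 1) * ∑ i, (1 - ζ i)⁻¹ = n * (n + α + β + 1) := by
  have h := hq.eval 1
  rw [hζ.eval_derivative_eq_mul_sum_inv hne] at h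
  apply mul_left_cancel₀ (hζ.eval_ne_zero hne)
  linear_combination -h

theorem sum_inv_one_add (hq : JacobiODE α β n q) (hζ : q.SplitsWithSimpleRoots ζ)
    (hne : ∀ i, (-1 : ℝ) ≠ ζ i) :
    2 * (β + 1) * ∑ i, (1 + ζ i)⁻¹ = n * (n + α + β + 1) := by
  have h := hq.eval (-1)
  rw [hζ.eval_derivative_eq_mul_sum_inv hne] at h
  have hflip : ∑ i, (-1 - ζ i)⁻¹ = -∑ i, (1 + ζ i)⁻¹ := by
    rw [← sum_neg_distrib]; congr 1 with i; rw [← inv_neg]; ring_nf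
  rw [hflip] at h
  apply mul_left_cancel₀ (hζ.eval_ne_zero hne)
  linear_combination -h

theorem one_sub_sq_mul_sum_inv_sub (hq : JacobiODE α β n q) (hζ : q.SplitsWithSimpleRoots ζ)
    (hζ' : (derivative q).SplitsWithSimpleRoots ζ') (i : Fin n) :
    (1 - ζ i ^ 2) * ∑ j, (ζ i - ζ' j)⁻¹ = (α + β + 2) * ζ i + α - β := by
  have h := hq.eval (ζ i)
  rw [hζ'.eval_derivative_eq_mul_sum_inv (root_ne_derivative_root hζ hζ' i), hζ.isRoot i] at h
  apply mul_left_cancel₀ (hζ.eval_derivative_ne_zero i)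
  linear_combination h

theorem one_sub_sq_mul_sum_inv_sub_sq_add (hq : JacobiODE α β n q)
    (hζ : q.SplitsWithSimpleRoots ζ) (hζ' : (derivative q).SplitsWithSimpleRoots ζ') (i : Fin n) :
    (1 - ζ i ^ 2) * ∑ j, ((ζ i - ζ' j)⁻¹) ^ 2 + 2 * ζ i * ∑ j, (ζ i - ζ' j)⁻¹ =
      n * (n + α + β + 1) - (α + β + 2) := by
  have hne := root_ne_derivative_root hζ hζ' i
  have h := hq.eval_derivative (ζ i)
  rw [hζ'.eval_derivative_derivative_eq hne, hζ'.eval_derivative_eq_mul_sum_inv hne] at h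
  have hS := one_sub_sq_mul_sum_inv_sub hq hζ hζ' i
  apply mul_left_cancel₀ (hζ.eval_derivative_ne_zero i)
  linear_combination -h + (derivative q).eval (ζ i) * (∑ j, (ζ i - ζ' j)⁻¹) * hS

variable (α β) in
noncomputable def weight (ζ : Fin n → ℝ) (ζ' : Fin m → ℝ) (i : Fin n) : Fin m ⊕ Bool → ℝ
  | .inl j => (1 - ζ i ^ 2) * ((ζ i - ζ' j)⁻¹) ^ 2
  | .inr true => (α + 1) * (1 + ζ i) * (1 - ζ i)⁻¹
  | .inr false => (β + 1) * (1 - ζ i) * (1 + ζ i)⁻¹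

def node (ζ' : Fin m → ℝ) : Fin m ⊕ Bool → ℝ
  | .inl j => ζ' j
  | .inr true => 1
  | .inr false => -1

theorem weight_nonneg (hα : -1 < α) (hβ : -1 < β) (hζ : ∀ i, ζ i ∈ Ioo (-1 : ℝ) 1) (i : Fin n)
    (k : Fin m ⊕ Bool) : 0 ≤ weight α β ζ ζ' i k := by
  have h1 : 0 < 1 - ζ i := by linarith [(hζ i).2]
  have h2 : 0 < 1 + ζ i := by linarith [(hζ i).1]
  rcases k with j | _ | _ <;> simp only [weight]
  · exact mul_nonneg (by nlinarith) (sq_nonneg _)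
  · have : 0 < β + 1 := by linarith
    positivity
  · have : 0 < α + 1 := by linarith
    positivity

theorem node_mem (hζ' : ∀ j, ζ' j ∈ Icc (-1 : ℝ) 1) (k : Fin m ⊕ Bool) :
    node ζ' k ∈ Icc (-1 : ℝ) 1 := by
  rcases k with j | _ | _ <;> simp [node, hζ']

theorem sum_weight (hq : JacobiODE α β n q) (hζ : q.SplitsWithSimpleRoots ζ)
    (hζ' : (derivative q).SplitsWithSimpleRoots ζ') (hmem : ∀ i, ζ i ∈ Ioo (-1 : ℝ) 1)
    (i : Fin n) : ∑ k, weight α β ζ ζ' i k = n * (n + α + β + 1) := by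
  have h1 : 1 - ζ i ≠ 0 := by linarith [(hmem i).2]
  have h2 : 1 + ζ i ≠ 0 := by linarith [(hmem i).1]
  have hS1 := one_sub_sq_mul_sum_inv_sub hq hζ hζ' i
  have hS2 := one_sub_sq_mul_sum_inv_sub_sq_add hq hζ hζ' i
  rw [Fintype.sum_sum_type, Fintype.sum_bool]
  simp only [weight, ← mul_sum]
  apply mul_left_cancel₀ (mul_ne_zero h1 h2)
  linear_combination (1 - ζ i ^ 2) * hS2 - 2 * ζ i * hS1 +
    (α + 1) * (1 + ζ i) ^ 2 * mul_inv_cancel₀ h1 + (β + 1) * (1 - ζ i) ^ 2 * mul_inv_cancel₀ h2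

theorem sum_weight_mul_sub_node (hq : JacobiODE α β n q) (hζ : q.SplitsWithSimpleRoots ζ)
    (hζ' : (derivative q).SplitsWithSimpleRoots ζ') (hmem : ∀ i, ζ i ∈ Ioo (-1 : ℝ) 1)
    (i : Fin n) : ∑ k, weight α β ζ ζ' i k * (ζ i - node ζ' k) = 0 := by
  have h1 : 1 - ζ i ≠ 0 := by linarith [(hmem i).2]
  have h2 : 1 + ζ i ≠ 0 := by linarith [(hmem i).1]
  have hterm j : (1 - ζ i ^ 2) * ((ζ i - ζ' j)⁻¹) ^ 2 * (ζ i - ζ' j) =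
      (1 - ζ i ^ 2) * (ζ i - ζ' j)⁻¹ := by
    field_simp [sub_ne_zero.2 (root_ne_derivative_root hζ hζ' i j)]
  rw [Fintype.sum_sum_type, Fintype.sum_bool]
  simp only [weight, node, hterm, ← mul_sum]
  linear_combination one_sub_sq_mul_sum_inv_sub hq hζ hζ' i -
    (α + 1) * (1 + ζ i) * mul_inv_cancel₀ h1 + (β + 1) * (1 - ζ i) * mul_inv_cancel₀ h2

theorem sum_weight_inl (hq : JacobiODE α β n q) (hζ : q.SplitsWithSimpleRoots ζ)
    (hζ' : (derivative q).SplitsWithSimpleRoots ζ') (j : Fin m) :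
    ∑ i, weight α β ζ ζ' i (.inl j) = n * (n + α + β + 1) - n := by
  have hterm i : (1 - ζ i ^ 2) * ((ζ i - ζ' j)⁻¹) ^ 2 =
      (1 - ζ' j ^ 2) * ((ζ' j - ζ i)⁻¹) ^ 2 + 2 * ζ' j * (ζ' j - ζ i)⁻¹ - 1 := by
    have := sub_ne_zero.2 (root_ne_derivative_root hζ hζ' i j)
    have := sub_ne_zero.2 (root_ne_derivative_root hζ hζ' i j).symm
    field_simp
    ring
  simp only [weight, hterm, sum_sub_distrib, sum_add_distrib, ← mul_sum,
    one_sub_sq_mul_sum_inv_sub_sq hq hζ hζ' j, sum_inv_sub_eq_zero hζ hζ' j]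
  simp

theorem sum_weight_inr_true (hq : JacobiODE α β n q) (hζ : q.SplitsWithSimpleRoots ζ)
    (hmem : ∀ i, ζ i ∈ Ioo (-1 : ℝ) 1) :
    ∑ i, weight α β ζ ζ' i (.inr true) = n * (n + α + β + 1) - n * (α + 1) := by
  have hterm i : (α + 1) * (1 + ζ i) * (1 - ζ i)⁻¹ = (α + 1) * (2 * (1 - ζ i)⁻¹ - 1) := by
    have : 1 - ζ i ≠ 0 := by linarith [(hmem i).2]
    field_simp
    ring
  have hK := sum_inv_one_sub hq hζ fun i => (hmem i).2.ne'
  simp only [weight, hterm, ← mul_sum, sum_sub_distrib, sum_const, card_univ, Fintype.card_fin,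
    nsmul_eq_mul, mul_one]
  linear_combination hK

theorem sum_weight_inr_false (hq : JacobiODE α β n q) (hζ : q.SplitsWithSimpleRoots ζ)
    (hmem : ∀ i, ζ i ∈ Ioo (-1 : ℝ) 1) :
    ∑ i, weight α β ζ ζ' i (.inr false) = n * (n + α + β + 1) - n * (β + 1) := by
  have hterm i : (β + 1) * (1 - ζ i) * (1 + ζ i)⁻¹ = (β + 1) * (2 * (1 + ζ i)⁻¹ - 1) := by
    have : 1 + ζ i ≠ 0 := by linarith [(hmem i).1]
    field_simp
    ring
  have hK := sum_inv_one_add hq hζ fun i => (hmem i).1.ne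
  simp only [weight, hterm, ← mul_sum, sum_sub_distrib, sum_const, card_univ, Fintype.card_fin,
    nsmul_eq_mul, mul_one]
  linear_combination hK

theorem majorization (hα : -1 < α) (hβ : -1 < β) (hq : JacobiODE α β n q)
    (hζ : q.SplitsWithSimpleRoots ζ) (hζ' : (derivative q).SplitsWithSimpleRoots ζ')
    (hmem : ∀ i, ζ i ∈ Ioo (-1 : ℝ) 1) (hmem' : ∀ j, ζ' j ∈ Icc (-1 : ℝ) 1) {f : ℝ → ℝ}
    (hf : ConvexOn ℝ (Icc (-1 : ℝ) 1) f) :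
    (n + α + β + 1) * ∑ i, f (ζ i) ≤
      (n + α + β) * ∑ j, f (ζ' j) + (n + β) * f 1 + (n + α) * f (-1) := by
  have hn : (1 : ℝ) ≤ n := by
    have := mt derivative_eq_zero.2 hζ'.ne_zero
    rw [hζ.natDegree_eq, Fintype.card_fin] at this
    exact_mod_cast Nat.one_le_iff_ne_zero.2 this
  have hK : 0 < (n : ℝ) * (n + α + β + 1) := mul_pos (by linarith) (by linarith)
  have hJ := hf.mul_sum_le_sum_sum_mul (x := ζ) (node_mem hmem') (weight_nonneg hα hβ hmem) hK
    (sum_weight hq hζ hζ' hmem) fun i => by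
      have h := sum_weight_mul_sub_node hq hζ hζ' hmem i
      simp only [mul_sub, sum_sub_distrib, ← sum_mul, sum_weight hq hζ hζ' hmem i] at h
      simp only [smul_eq_mul]
      linear_combination -h
  simp only [Fintype.sum_sum_type, Fintype.sum_bool, node, sum_weight_inl hq hζ hζ',
    sum_weight_inr_true hq hζ hmem, sum_weight_inr_false hq hζ hmem, ← mul_sum] at hJ
  refine le_of_mul_le_mul_left ?_ (by linarith : (0 : ℝ) < n)
  linear_combination hJ

end JacobiODE

noncomputable def rodriguesPoly (n : ℕ) (α β : ℝ) : ℕ → ℝ[X]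
  | 0 => 1
  | k + 1 => (1 - X ^ 2) * derivative (rodriguesPoly n α β k) +
      (C (β - α) - C (2 * n + α + β - 2 * k) * X) * rodriguesPoly n α β k

namespace rodriguesPoly

variable (n : ℕ) (α β : ℝ)

theorem natDegree_le (k : ℕ) : (rodriguesPoly n α β k).natDegree ≤ k := by
  induction k with
  | zero => simp [rodriguesPoly]
  | succ k ih =>
    rw [rodriguesPoly]
    refine (natDegree_add_le _ _).trans (max_le ?_ ?_)
    · rcases k with _ | k
      · simp [rodriguesPoly]
      refine natDegree_mul_le.trans ?_
      have h1 : (1 - X ^ 2 : ℝ[X]).natDegree ≤ 2 := (natDegree_sub_le _ _).trans (by simp)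
      have h2 := (natDegree_derivative_le (rodriguesPoly n α β (k + 1))).trans
        (Nat.sub_le_sub_right ih 1)
      omega
    · refine natDegree_mul_le.trans ?_
      have h1 : (C (β - α) - C (2 * n + α + β - 2 * k) * X : ℝ[X]).natDegree ≤ 1 :=
        (natDegree_sub_le _ _).trans (max_le (by simp) ((natDegree_C_mul_le _ _).trans (by simp)))
      omega

theorem derivative_succ_of_jacobiODE {k : ℕ}
    (h : JacobiODE (α + n - k) (β + n - k) k (rodriguesPoly n α β k)) :
    derivative (rodriguesPoly n α β (k + 1)) =
      C (-(k + 1) * (2 * n + α + β - k)) * rodriguesPoly n α β k := by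
  rw [JacobiODE] at h
  rw [rodriguesPoly]
  simp only [derivative_add, derivative_mul, derivative_sub, derivative_one,
    derivative_X_pow, derivative_C, derivative_X] at h ⊢
  simp only [map_add, map_sub, map_mul, map_neg, map_one, map_ofNat, map_natCast] at h ⊢
  push_cast at h ⊢
  linear_combination h

theorem jacobiODE_succ_of_derivative_succ {k : ℕ}
    (h : derivative (rodriguesPoly n α β (k + 1)) =
      C (-(k + 1) * (2 * n + α + β - k)) * rodriguesPoly n α β k) :
    JacobiODE (α + n - (k + 1 : ℕ)) (β + n - (k + 1 : ℕ)) (k + 1)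
      (rodriguesPoly n α β (k + 1)) := by
  have h2 : derivative (derivative (rodriguesPoly n α β (k + 1))) =
      C (-(k + 1) * (2 * n + α + β - k)) * derivative (rodriguesPoly n α β k) := by
    rw [h, derivative_C_mul]
  rw [JacobiODE, h2, h, rodriguesPoly]
  simp only [map_add, map_sub, map_mul, map_neg, map_one, map_ofNat, map_natCast]
  push_cast
  ring

theorem jacobiODE (k : ℕ) : JacobiODE (α + n - k) (β + n - k) k (rodriguesPoly n α β k) := by
  induction k with
  | zero => simp [JacobiODE, rodriguesPoly]
  | succ k ih =>
    exact jacobiODE_succ_of_derivative_succ n α β (derivative_succ_of_jacobiODE n α β ih)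

theorem derivative_succ (k : ℕ) :
    derivative (rodriguesPoly n α β (k + 1)) =
      C (-(k + 1) * (2 * n + α + β - k)) * rodriguesPoly n α β k :=
  derivative_succ_of_jacobiODE n α β (jacobiODE n α β k)

theorem ne_zero (hαβ : -2 < α + β) {k : ℕ} (hk : k ≤ n) : rodriguesPoly n α β k ≠ 0 := by
  induction k with
  | zero => simp [rodriguesPoly]
  | succ k ih =>
    have hc : -((k : ℝ) + 1) * (2 * n + α + β - k) ≠ 0 := by
      have : (k : ℝ) + 1 ≤ n := by exact_mod_cast hk
      nlinarith
    intro h0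
    have := derivative_succ n α β k
    rw [h0, derivative_zero, eq_comm, mul_eq_zero, C_eq_zero] at this
    exact this.elim hc (ih (by omega))

end rodriguesPoly

theorem hasDerivAt_one_sub_rpow_mul_one_add_rpow_mul_eval (a b : ℝ) (p : ℝ[X]) {x : ℝ}
    (hx : x ∈ Ioo (-1 : ℝ) 1) :
    HasDerivAt (fun y => (1 - y) ^ a * (1 + y) ^ b * p.eval y)
      ((1 - x) ^ (a - 1) * (1 + x) ^ (b - 1) *
        ((1 - X ^ 2) * derivative p + (C (b - a) - C (a + b) * X) * p).eval x) x := by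
  have h1 : 0 < 1 - x := by linarith [hx.2]
  have h2 : 0 < 1 + x := by linarith [hx.1]
  have hd := ((((hasDerivAt_id x).const_sub 1).rpow_const (p := a) (Or.inl h1.ne')).mul
    (((hasDerivAt_id x).const_add 1).rpow_const (p := b) (Or.inl h2.ne'))).mul (p.hasDerivAt x)
  refine hd.congr_deriv ?_
  simp only [eval_add, eval_mul, eval_sub, eval_one, eval_pow, eval_X, eval_C, id, Pi.mul_apply]
  rw [Real.rpow_sub_one h1.ne', Real.rpow_sub_one h2.ne']
  field_simp
  ring

theorem iteratedDeriv_one_sub_rpow_mul_one_add_rpow (n : ℕ) (α β : ℝ) (k : ℕ) {x : ℝ}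
    (hx : x ∈ Ioo (-1 : ℝ) 1) :
    iteratedDeriv k (fun z : ℝ => (1 - z) ^ ((n : ℝ) + α) * (1 + z) ^ ((n : ℝ) + β)) x =
      (1 - x) ^ ((n : ℝ) + α - k) * (1 + x) ^ ((n : ℝ) + β - k) *
        (rodriguesPoly n α β k).eval x := by
  induction k generalizing x with
  | zero => simp [rodriguesPoly]
  | succ k ih =>
    rw [iteratedDeriv_succ, Filter.EventuallyEq.deriv_eq
      (Filter.eventuallyEq_of_mem (isOpen_Ioo.mem_nhds hx) fun y hy => ih hy)]
    convert (hasDerivAt_one_sub_rpow_mul_one_add_rpow_mul_eval _ _ _ hx).deriv using 3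
    · push_cast; ring_nf
    · push_cast; ring_nf
    · rw [rodriguesPoly]
      congr 4
      · ring
      · congr 1; ring

theorem jacobiFun_eq_eval {n : ℕ} {α β x : ℝ} (hx : x ∈ Ioo (-1 : ℝ) 1) :
    jacobiFun n α β x = (-1 : ℝ) ^ n / (2 ^ n * n.factorial) * (rodriguesPoly n α β n).eval x := by
  have h1 : 0 < 1 - x := by linarith [hx.2]
  have h2 : 0 < 1 + x := by linarith [hx.1]
  rw [jacobiFun, iteratedDeriv_one_sub_rpow_mul_one_add_rpow n α β n hx, add_sub_cancel_left,
    add_sub_cancel_left, Real.rpow_neg h1.le, Real.rpow_neg h2.le]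
  have : (1 - x) ^ α * (1 + x) ^ β ≠ 0 := by positivity
  field_simp

theorem jacobiFun_eq_zero_iff {n : ℕ} {α β x : ℝ} (hx : x ∈ Ioo (-1 : ℝ) 1) :
    jacobiFun n α β x = 0 ↔ (rodriguesPoly n α β n).IsRoot x := by
  rw [jacobiFun_eq_eval hx, IsRoot.def, mul_eq_zero, or_iff_right]
  positivity

theorem deriv_jacobiFun_eq_zero_iff {n : ℕ} {α β x : ℝ} (hx : x ∈ Ioo (-1 : ℝ) 1) :
    deriv (jacobiFun n α β) x = 0 ↔ (derivative (rodriguesPoly n α β n)).IsRoot x := by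
  have hderiv := ((rodriguesPoly n α β n).hasDerivAt x).const_mul
    ((-1 : ℝ) ^ n / (2 ^ n * n.factorial))
  rw [(hderiv.congr_of_eventuallyEq (Filter.eventuallyEq_of_mem (isOpen_Ioo.mem_nhds hx)
    fun y hy => jacobiFun_eq_eval hy)).deriv, IsRoot.def, mul_eq_zero, or_iff_right]
  positivity

theorem jacobi_zeros_derivative_majorization_general (α β : ℝ) (hα : -1 < α) (hβ : -1 < β)
    (n : ℕ) (hn : 2 ≤ n) (ζ : Fin n → ℝ) (ζ' : Fin (n - 1) → ℝ)
    (hζmem : ∀ i, ζ i ∈ Set.Ioo (-1 : ℝ) 1)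
    (hζroot : ∀ i, jacobiFun n α β (ζ i) = 0)
    (hζinj : Function.Injective ζ)
    (hζ'mem : ∀ j, ζ' j ∈ Set.Ioo (-1 : ℝ) 1)
    (hζ'root : ∀ j, deriv (jacobiFun n α β) (ζ' j) = 0)
    (hζ'inj : Function.Injective ζ')
    (f : ℝ → ℝ) (hconv : ConvexOn ℝ (Set.Icc (-1 : ℝ) 1) f) :
    (n + α + β + 1) * ∑ i, f (ζ i) ≤
      (n + α + β) * ∑ j, f (ζ' j) + (n + β) * f 1 + (n + α) * f (-1) := by
  set q := rodriguesPoly n α β n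
  have hq : JacobiODE α β n q := by simpa using rodriguesPoly.jacobiODE n α β n
  have hζ : q.SplitsWithSimpleRoots ζ :=
    ⟨rodriguesPoly.ne_zero n α β (by linarith) le_rfl,
      by simpa using rodriguesPoly.natDegree_le n α β n, hζinj,
      fun i => (jacobiFun_eq_zero_iff (hζmem i)).1 (hζroot i)⟩
  have hζ' : (derivative q).SplitsWithSimpleRoots ζ' := by
    refine ⟨?_, ?_, hζ'inj, fun j => (deriv_jacobiFun_eq_zero_iff (hζ'mem j)).1 (hζ'root j)⟩
    · rw [Ne, derivative_eq_zero, hζ.natDegree_eq, Fintype.card_fin]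
      omega
    · exact (natDegree_derivative_le q).trans_eq (by simp [hζ.natDegree_eq])
  exact hq.majorization hα hβ hζ hζ' hζmem (fun j => Ioo_subset_Icc_self (hζ'mem j)) hconv

theorem jacobi_zeros_derivative_majorization (α β : ℝ) (hα : -1 < α) (hβ : -1 < β)
    (n : ℕ) (hn : 2 ≤ n) (ζ : Fin n → ℝ) (ζ' : Fin (n - 1) → ℝ)
    (hζmem : ∀ i, ζ i ∈ Set.Ioo (-1 : ℝ) 1)
    (hζroot : ∀ i, jacobiFun n α β (ζ i) = 0)
    (hζinj : Function.Injective ζ)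
    (hζ'mem : ∀ j, ζ' j ∈ Set.Ioo (-1 : ℝ) 1)
    (hζ'root : ∀ j, deriv (jacobiFun n α β) (ζ' j) = 0)
    (hζ'inj : Function.Injective ζ')
    (f : ℝ → ℝ) (hconv : ConvexOn ℝ (Set.Icc (-1 : ℝ) 1) f)
    (hcont : ContinuousOn f (Set.Icc (-1 : ℝ) 1)) :
    (n + α + β + 1) * ∑ i, f (ζ i) ≤
      (n + α + β) * ∑ j, f (ζ' j) + (n + β) * f 1 + (n + α) * f (-1) :=
  jacobi_zeros_derivative_majorization_general α β hα hβ n hn ζ ζ' hζmem hζroot hζinj hζ'mem hζ'root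
    hζ'inj f hconv
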